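/- arXiv:2309.04906 — 2 statements merged into one kernel-verified Lean document; each statement's English description precedes it below -/
import Mathlib

section
/- (Lions interpolation inequality) Let A be a strictly positive self-adjoint operator on a Hilbert space and let α < β < γ be real numbers. Then there exists a constant L = L(α,β,γ) such that ‖A^β u‖ ≤ L ‖A^α u‖^{(γ−β)/(γ−α)} · ‖A^γ u‖^{(β−α)/(γ−α)} for every u ∈ D(A^γ). -/
/-!
Writing `β = (1 - θ) α + θ γ` with `θ = (β - α)/(γ - α) ∈ (0, 1)`, each term
`μₙ^(2β) |uₙ|²` of `‖A^β u‖²` is the geometric mean `aₙ^(1-θ) bₙ^θ` of the corresponding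
terms of `‖A^α u‖²` and `‖A^γ u‖²`, so Hölder's inequality with exponents `1/(1-θ)` and `1/θ`
gives the interpolation inequality with `L = 1`.
-/

open Real

theorem Real.tsum_rpow_one_sub_mul_rpow_le {ι : Type*} {a b : ι → ℝ}
    (ha : ∀ i, 0 ≤ a i) (hb : ∀ i, 0 ≤ b i) (ha_sum : Summable a) (hb_sum : Summable b)
    {θ : ℝ} (hθ₀ : 0 < θ) (hθ₁ : θ < 1) :
    ∑' i, a i ^ (1 - θ) * b i ^ θ ≤ (∑' i, a i) ^ (1 - θ) * (∑' i, b i) ^ θ := by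
  have hθ' : 0 < 1 - θ := sub_pos.mpr hθ₁
  have hpow_inv {x s : ℝ} (hx : 0 ≤ x) (hs : 0 < s) : (x ^ s) ^ s⁻¹ = x := by
    rw [← rpow_mul hx, mul_inv_cancel₀ hs.ne', rpow_one]
  have holder := inner_le_Lp_mul_Lq_tsum_of_nonneg (HolderConjugate.one_sub_inv_inv hθ₀ hθ₁)
    (f := fun i => a i ^ (1 - θ)) (g := fun i => b i ^ θ)
    (fun i => rpow_nonneg (ha i) _) (fun i => rpow_nonneg (hb i) _)
    (by simpa only [hpow_inv (ha _) hθ'] using ha_sum)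
    (by simpa only [hpow_inv (hb _) hθ₀] using hb_sum)
  simpa only [hpow_inv (ha _) hθ', hpow_inv (hb _) hθ₀, one_div, inv_inv] using holder

theorem summable_rpow_mul_of_le_of_summable {μ c : ℕ → ℝ} {m σ τ : ℝ} (hm : 0 < m)
    (hμ : ∀ n, m ≤ μ n) (hc : ∀ n, 0 ≤ c n) (hστ : σ ≤ τ)
    (hτ : Summable fun n => μ n ^ τ * c n) :
    Summable fun n => μ n ^ σ * c n := by
  refine .of_nonneg_of_le (fun n => mul_nonneg (rpow_nonneg (hm.trans_le (hμ n)).le _) (hc n))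
    (fun n => ?_) (hτ.mul_left (m ^ (σ - τ)))
  have hμn : 0 < μ n := hm.trans_le (hμ n)
  calc μ n ^ σ * c n = μ n ^ (σ - τ) * (μ n ^ τ * c n) := by
        rw [← mul_assoc, ← rpow_add hμn, sub_add_cancel]
    _ ≤ m ^ (σ - τ) * (μ n ^ τ * c n) :=
        mul_le_mul_of_nonneg_right (rpow_le_rpow_of_nonpos hm (hμ n) (by linarith))
          (mul_nonneg (rpow_nonneg hμn.le _) (hc n))

theorem rpow_mul_one_sub_mul_rpow_mul {μ x : ℝ} (hμ : 0 < μ) (hx : 0 ≤ x) (s t θ : ℝ) :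
    (μ ^ s * x) ^ (1 - θ) * (μ ^ t * x) ^ θ = μ ^ ((1 - θ) * s + θ * t) * x := by
  rw [mul_rpow (rpow_nonneg hμ.le _) hx, mul_rpow (rpow_nonneg hμ.le _) hx,
    mul_mul_mul_comm, ← rpow_mul hμ.le, ← rpow_mul hμ.le, ← rpow_add hμ,
    ← rpow_add' hx (by norm_num), sub_add_cancel, rpow_one, mul_comm s, mul_comm t]

theorem sqrt_rpow_comm {x : ℝ} (hx : 0 ≤ x) (s : ℝ) : √(x ^ s) = √x ^ s := by
  rw [sqrt_eq_rpow, sqrt_eq_rpow, ← rpow_mul hx, ← rpow_mul hx, mul_comm]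

/-- **Lions interpolation inequality.** In the spectral representation of a
strictly positive self-adjoint operator `A` (multiplication by the spectral values
`μ : ℕ → ℝ`, `μ n ≥ m > 0`, on `ℓ²`), with `‖A^σ u‖² = ∑ μₙ^(2σ) ‖uₙ‖²`: for real numbers
`α < β < γ` there is a constant `L = L(α,β,γ)` such that
`‖A^β u‖ ≤ L ‖A^α u‖^((γ-β)/(γ-α)) · ‖A^γ u‖^((β-α)/(γ-α))` for every `u ∈ D(A^γ)`. -/
theorem statement1 (μ : ℕ → ℝ) (m : ℝ) (hm : 0 < m) (hμ : ∀ n, m ≤ μ n)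
    (α β γ : ℝ) (hαβ : α < β) (hβγ : β < γ) :
    ∃ L > 0, ∀ u : ℕ → ℂ,
      Summable (fun n => μ n ^ (2 * γ) * ‖u n‖ ^ 2) →
      Real.sqrt (∑' n, μ n ^ (2 * β) * ‖u n‖ ^ 2) ≤
        L * Real.sqrt (∑' n, μ n ^ (2 * α) * ‖u n‖ ^ 2) ^ ((γ - β) / (γ - α)) *
          Real.sqrt (∑' n, μ n ^ (2 * γ) * ‖u n‖ ^ 2) ^ ((β - α) / (γ - α)) := by
  refine ⟨1, one_pos, fun u hγ_sum => ?_⟩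
  set θ := (β - α) / (γ - α) with hθ
  have hγα : 0 < γ - α := by linarith
  have hθ₀ : 0 < θ := div_pos (by linarith) hγα
  have hθ₁ : θ < 1 := (div_lt_one hγα).mpr (by linarith)
  have h_one_sub : 1 - θ = (γ - β) / (γ - α) := by rw [hθ]; field_simp; ring
  have h_interp : (1 - θ) * (2 * α) + θ * (2 * γ) = 2 * β := by
    rw [h_one_sub, hθ]; field_simp; ring
  have hterm (σ : ℝ) (n : ℕ) : 0 ≤ μ n ^ σ * ‖u n‖ ^ 2 :=
    mul_nonneg (rpow_nonneg (hm.trans_le (hμ n)).le _) (sq_nonneg _)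
  have hα_sum := summable_rpow_mul_of_le_of_summable hm hμ (fun n => sq_nonneg ‖u n‖)
    (by linarith : 2 * α ≤ 2 * γ) hγ_sum
  have holder := tsum_rpow_one_sub_mul_rpow_le (hterm _) (hterm _) hα_sum hγ_sum hθ₀ hθ₁
  simp only [rpow_mul_one_sub_mul_rpow_mul (hm.trans_le (hμ _)) (sq_nonneg ‖u _‖),
    h_interp] at holder
  calc √(∑' n, μ n ^ (2 * β) * ‖u n‖ ^ 2)
      ≤ √((∑' n, μ n ^ (2 * α) * ‖u n‖ ^ 2) ^ (1 - θ) *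
          (∑' n, μ n ^ (2 * γ) * ‖u n‖ ^ 2) ^ θ) := sqrt_le_sqrt holder
    _ = _ := by
      rw [one_mul, sqrt_mul (rpow_nonneg (tsum_nonneg (hterm _)) _),
        sqrt_rpow_comm (tsum_nonneg (hterm _)), sqrt_rpow_comm (tsum_nonneg (hterm _)),
        h_one_sub]
end

section
/- The sesquilinear form 𝔅((φ,ψ,y,z),(φ*,ψ*,y*,z*)) = κ₁⟨φₓ−ψ, φₓ*−ψ*⟩ + κ₂⟨yₓ−z, yₓ*−z*⟩ + b₁⟨ψₓ, ψₓ*⟩ + b₂⟨zₓ, zₓ*⟩ + ȷ⟨y−φ, y*−φ*⟩ is bounded and strongly coercive on [H₀¹(0,l)]⁴, i.e., there exists c > 0 such that 𝔅(V,V) ≥ c(‖φₓ‖² + ‖ψₓ‖² + ‖yₓ‖² + ‖zₓ‖²) for all V = (φ,ψ,y,z) ∈ [H₀¹(0,l)]⁴. -/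
noncomputable section

/-- The sesquilinear form `𝔅` of the stationary DWCNT problem, on (representatives of)
`H₀¹(0,l)` functions: `𝔅(V,W) = κ₁⟨φₓ-ψ, φₓ*-ψ*⟩ + κ₂⟨yₓ-z, yₓ*-z*⟩ + b₁⟨ψₓ, ψₓ*⟩
+ b₂⟨zₓ, zₓ*⟩ + ȷ⟨y-φ, y*-φ*⟩`, with the `L²(0,l)` inner product. -/
def Bform (l κ₁ κ₂ b₁ b₂ j : ℝ) (φ ψ y z φ₂ ψ₂ y₂ z₂ : ℝ → ℂ) : ℂ :=
  (κ₁ : ℂ) * (∫ x in (0:ℝ)..l, (starRingEnd ℂ) (deriv φ x - ψ x) * (deriv φ₂ x - ψ₂ x))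
    + (κ₂ : ℂ) * (∫ x in (0:ℝ)..l, (starRingEnd ℂ) (deriv y x - z x) * (deriv y₂ x - z₂ x))
    + (b₁ : ℂ) * (∫ x in (0:ℝ)..l, (starRingEnd ℂ) (deriv ψ x) * (deriv ψ₂ x))
    + (b₂ : ℂ) * (∫ x in (0:ℝ)..l, (starRingEnd ℂ) (deriv z x) * (deriv z₂ x))
    + (j : ℂ) * (∫ x in (0:ℝ)..l, (starRingEnd ℂ) (y x - φ x) * (y₂ x - φ₂ x))

/-- The squared `[H₀¹(0,l)]⁴` (semi-)norm `‖φₓ‖² + ‖ψₓ‖² + ‖yₓ‖² + ‖zₓ‖²`. -/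
def H01normSq (l : ℝ) (φ ψ y z : ℝ → ℂ) : ℝ :=
  (∫ x in (0:ℝ)..l, ‖deriv φ x‖ ^ 2) + (∫ x in (0:ℝ)..l, ‖deriv ψ x‖ ^ 2)
    + (∫ x in (0:ℝ)..l, ‖deriv y x‖ ^ 2) + (∫ x in (0:ℝ)..l, ‖deriv z x‖ ^ 2)

/-- A representative of `H₀¹(0,l)`: a continuously differentiable function vanishing at the
endpoints. -/
def InH01 (l : ℝ) (φ : ℝ → ℂ) : Prop :=
  ContDiff ℝ 1 φ ∧ φ 0 = 0 ∧ φ l = 0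

/-!
The components of `V` and their derivatives are continuous, so they define vectors of the Hilbert
space `L²(0,l)`, in which `𝔅` is a real combination of inner products. The Poincaré inequality
`‖u‖ ≤ l ‖uₓ‖` for `u(0) = 0` bounds every factor of these inner products by the `[H₀¹]⁴`-norm, so
Cauchy–Schwarz gives boundedness. For coercivity, `‖φₓ‖ ≤ ‖φₓ - ψ‖ + l ‖ψₓ‖` gives
`‖φₓ‖² + ‖ψₓ‖² ≤ (2l² + 2)(‖φₓ - ψ‖² + ‖ψₓ‖²)`, likewise for `(y, z)`, and the `ȷ`-term is
nonnegative.
-/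

open MeasureTheory Set
open scoped InnerProductSpace

section L2

variable {a b : ℝ}

abbrev L2Ioc (a b : ℝ) := Lp ℂ 2 (volume.restrict (Ioc a b))

lemma memLp_two_restrict_Ioc {f : ℝ → ℂ} (hf : Continuous f) :
    MemLp f 2 (volume.restrict (Ioc a b)) := by
  obtain ⟨C, hC⟩ := isCompact_Icc.exists_bound_of_continuousOn (s := Icc a b) hf.continuousOn
  exact .of_bound hf.aestronglyMeasurable C
    (ae_restrict_of_forall_mem measurableSet_Ioc fun x hx => hC x (Ioc_subset_Icc_self hx))

def toL2Ioc (a b : ℝ) {f : ℝ → ℂ} (hf : Continuous f) : L2Ioc a b :=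
  (memLp_two_restrict_Ioc hf).toLp f

lemma inner_toL2Ioc (hab : a ≤ b) {f g : ℝ → ℂ} (hf : Continuous f) (hg : Continuous g) :
    ⟪toL2Ioc a b hf, toL2Ioc a b hg⟫_ℂ = ∫ x in a..b, (starRingEnd ℂ) (f x) * g x := by
  rw [L2.inner_def, intervalIntegral.integral_of_le hab]
  refine integral_congr_ae ?_
  filter_upwards [(memLp_two_restrict_Ioc hf).coeFn_toLp, (memLp_two_restrict_Ioc hg).coeFn_toLp]
    with x hfx hgx
  rw [toL2Ioc, toL2Ioc, hfx, hgx, RCLike.inner_apply, mul_comm]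

lemma norm_toL2Ioc_sq (hab : a ≤ b) {f : ℝ → ℂ} (hf : Continuous f) :
    ‖toL2Ioc a b hf‖ ^ 2 = ∫ x in a..b, ‖f x‖ ^ 2 := by
  have hinner := inner_toL2Ioc hab hf hf
  rw [inner_self_eq_norm_sq_to_K] at hinner
  have hreal : ∫ x in a..b, (starRingEnd ℂ) (f x) * f x = ((∫ x in a..b, ‖f x‖ ^ 2 : ℝ) : ℂ) := by
    rw [← intervalIntegral.integral_ofReal]
    congr 1 with x
    rw [mul_comm, Complex.mul_conj, Complex.normSq_eq_norm_sq]
  exact Complex.ofReal_injective (by push_cast; exact hinner.trans hreal)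

lemma norm_toL2Ioc (hab : a ≤ b) {f : ℝ → ℂ} (hf : Continuous f) :
    ‖toL2Ioc a b hf‖ = √(∫ x in a..b, ‖f x‖ ^ 2) := by
  rw [← norm_toL2Ioc_sq hab, Real.sqrt_sq (norm_nonneg _)]

lemma toL2Ioc_sub {f g : ℝ → ℂ} (hf : Continuous f) (hg : Continuous g) :
    toL2Ioc a b (hf.sub hg) = toL2Ioc a b hf - toL2Ioc a b hg :=
  MemLp.toLp_sub _ _

lemma integral_norm_le_sqrt_mul_norm_toL2Ioc (hab : a ≤ b) {g : ℝ → ℂ} (hg : Continuous g) :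
    ∫ x in a..b, ‖g x‖ ≤ √(b - a) * ‖toL2Ioc a b hg‖ := by
  have hG : Continuous fun x => (‖g x‖ : ℂ) := by fun_prop
  have hcs := norm_inner_le_norm (𝕜 := ℂ) (toL2Ioc a b (continuous_const (y := (1 : ℂ))))
    (toL2Ioc a b hG)
  rw [inner_toL2Ioc hab, norm_toL2Ioc hab, norm_toL2Ioc hab] at hcs
  rw [norm_toL2Ioc hab]
  simpa [intervalIntegral.integral_ofReal, hab, abs_of_nonneg,
    intervalIntegral.integral_nonneg hab] using hcs

lemma norm_le_integral_norm_deriv {f : ℝ → ℂ} (hf : ContDiff ℝ 1 f) (ha : f a = 0) {x : ℝ}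
    (hx : x ∈ Icc a b) : ‖f x‖ ≤ ∫ t in a..b, ‖deriv f t‖ := by
  have hdf := hf.continuous_deriv le_rfl
  have hftc : ∫ t in a..x, deriv f t = f x := by
    rw [intervalIntegral.integral_deriv_eq_sub (fun t _ => hf.differentiable one_ne_zero t)
      (hdf.intervalIntegrable _ _), ha, sub_zero]
  calc ‖f x‖ ≤ ∫ t in a..x, ‖deriv f t‖ :=
        hftc ▸ intervalIntegral.norm_integral_le_integral_norm hx.1
    _ ≤ ∫ t in a..b, ‖deriv f t‖ :=
        intervalIntegral.integral_mono_interval le_rfl hx.1 hx.2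
          (ae_of_all _ fun _ => norm_nonneg _) (hdf.norm.intervalIntegrable _ _)

theorem norm_toL2Ioc_le_mul_norm_deriv (hab : a ≤ b) {f : ℝ → ℂ} (hf : ContDiff ℝ 1 f)
    (ha : f a = 0) :
    ‖toL2Ioc a b hf.continuous‖ ≤ (b - a) * ‖toL2Ioc a b (hf.continuous_deriv le_rfl)‖ := by
  set M := ‖toL2Ioc a b (hf.continuous_deriv le_rfl)‖
  have hbound : ∀ x ∈ Icc a b, ‖f x‖ ≤ √(b - a) * M := fun x hx =>
    (norm_le_integral_norm_deriv hf ha hx).trans (integral_norm_le_sqrt_mul_norm_toL2Ioc hab _)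
  have hsq : ‖toL2Ioc a b hf.continuous‖ ^ 2 ≤ ((b - a) * M) ^ 2 := by
    calc ‖toL2Ioc a b hf.continuous‖ ^ 2 = ∫ x in a..b, ‖f x‖ ^ 2 := norm_toL2Ioc_sq hab _
      _ ≤ ∫ _ in a..b, (√(b - a) * M) ^ 2 :=
          intervalIntegral.integral_mono_on hab ((hf.continuous.norm.pow 2).intervalIntegrable _ _)
            intervalIntegrable_const fun x hx => by gcongr; exact hbound x hx
      _ = ((b - a) * M) ^ 2 := by
          rw [intervalIntegral.integral_const, smul_eq_mul, mul_pow,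
            Real.sq_sqrt (sub_nonneg.2 hab)]
          ring
  exact le_of_sq_le_sq hsq (by have := sub_nonneg.2 hab; positivity)

end L2

section InnerBounds

variable {𝕜 E : Type*} [RCLike 𝕜] [NormedAddCommGroup E] [InnerProductSpace 𝕜 E]

lemma norm_ofReal_mul_inner_le {r A B : ℝ} (hr : 0 ≤ r) {u v : E} (hu : ‖u‖ ≤ A)
    (hv : ‖v‖ ≤ B) : ‖(r : 𝕜) * ⟪u, v⟫_𝕜‖ ≤ r * (A * B) := by
  rw [norm_mul, RCLike.norm_ofReal, abs_of_nonneg hr]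
  gcongr
  exact (norm_inner_le_norm u v).trans
    (mul_le_mul hu hv (norm_nonneg _) ((norm_nonneg _).trans hu))

end InnerBounds

lemma sq_norm_add_sq_norm_le {F : Type*} [SeminormedAddCommGroup F] {C : ℝ} {u v w : F}
    (h : ‖u‖ ≤ C * ‖w‖) :
    ‖v‖ ^ 2 + ‖w‖ ^ 2 ≤ (2 * C ^ 2 + 2) * (‖v - u‖ ^ 2 + ‖w‖ ^ 2) := by
  have hv : ‖v‖ ≤ ‖v - u‖ + C * ‖w‖ := (norm_le_norm_sub_add v u).trans (by linarith)
  nlinarith [sq_nonneg (‖v - u‖ - C * ‖w‖), norm_nonneg v, mul_self_le_mul_self (norm_nonneg v) hv]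

/-- The displacements `φ, ψ, y, z` of the two coupled beams, with vectors `φ', ψ', y', z'` in the
role of their derivatives; the two are related only through `BeamState.Poincare`. -/
structure BeamState (E : Type*) where
  (φ ψ y z φ' ψ' y' z' : E)

namespace BeamState

section Norms

variable {E : Type*} [NormedAddCommGroup E] {C : ℝ} {V : BeamState E}

def energy (V : BeamState E) : ℝ := ‖V.φ'‖ ^ 2 + ‖V.ψ'‖ ^ 2 + ‖V.y'‖ ^ 2 + ‖V.z'‖ ^ 2

def Poincare (C : ℝ) (V : BeamState E) : Prop :=
  ‖V.φ‖ ≤ C * ‖V.φ'‖ ∧ ‖V.ψ‖ ≤ C * ‖V.ψ'‖ ∧ ‖V.y‖ ≤ C * ‖V.y'‖ ∧ ‖V.z‖ ≤ C * ‖V.z'‖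

lemma norm_φ'_le_sqrt_energy (V : BeamState E) : ‖V.φ'‖ ≤ √V.energy :=
  abs_norm V.φ' ▸ Real.abs_le_sqrt (by
    unfold energy; linarith [sq_nonneg ‖V.ψ'‖, sq_nonneg ‖V.y'‖, sq_nonneg ‖V.z'‖])

lemma norm_ψ'_le_sqrt_energy (V : BeamState E) : ‖V.ψ'‖ ≤ √V.energy :=
  abs_norm V.ψ' ▸ Real.abs_le_sqrt (by
    unfold energy; linarith [sq_nonneg ‖V.φ'‖, sq_nonneg ‖V.y'‖, sq_nonneg ‖V.z'‖])

lemma norm_y'_le_sqrt_energy (V : BeamState E) : ‖V.y'‖ ≤ √V.energy :=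
  abs_norm V.y' ▸ Real.abs_le_sqrt (by
    unfold energy; linarith [sq_nonneg ‖V.φ'‖, sq_nonneg ‖V.ψ'‖, sq_nonneg ‖V.z'‖])

lemma norm_z'_le_sqrt_energy (V : BeamState E) : ‖V.z'‖ ≤ √V.energy :=
  abs_norm V.z' ▸ Real.abs_le_sqrt (by
    unfold energy; linarith [sq_nonneg ‖V.φ'‖, sq_nonneg ‖V.ψ'‖, sq_nonneg ‖V.y'‖])

lemma Poincare.norm_φ'_sub_ψ_le (hC : 0 ≤ C) (hV : V.Poincare C) :
    ‖V.φ' - V.ψ‖ ≤ (1 + C) * √V.energy :=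
  calc ‖V.φ' - V.ψ‖ ≤ ‖V.φ'‖ + C * ‖V.ψ'‖ := (norm_sub_le _ _).trans (by linarith [hV.2.1])
    _ ≤ √V.energy + C * √V.energy := by
        gcongr; exacts [V.norm_φ'_le_sqrt_energy, V.norm_ψ'_le_sqrt_energy]
    _ = (1 + C) * √V.energy := by ring

lemma Poincare.norm_y'_sub_z_le (hC : 0 ≤ C) (hV : V.Poincare C) :
    ‖V.y' - V.z‖ ≤ (1 + C) * √V.energy :=
  calc ‖V.y' - V.z‖ ≤ ‖V.y'‖ + C * ‖V.z'‖ := (norm_sub_le _ _).trans (by linarith [hV.2.2.2])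
    _ ≤ √V.energy + C * √V.energy := by
        gcongr; exacts [V.norm_y'_le_sqrt_energy, V.norm_z'_le_sqrt_energy]
    _ = (1 + C) * √V.energy := by ring

lemma Poincare.norm_y_sub_φ_le (hC : 0 ≤ C) (hV : V.Poincare C) :
    ‖V.y - V.φ‖ ≤ 2 * C * √V.energy :=
  calc ‖V.y - V.φ‖ ≤ C * ‖V.y'‖ + C * ‖V.φ'‖ :=
        (norm_sub_le _ _).trans (add_le_add hV.2.2.1 hV.1)
    _ ≤ C * √V.energy + C * √V.energy := by
        gcongr; exacts [V.norm_y'_le_sqrt_energy, V.norm_φ'_le_sqrt_energy]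
    _ = 2 * C * √V.energy := by ring

end Norms

variable {𝕜 E : Type*} [RCLike 𝕜] [NormedAddCommGroup E] [InnerProductSpace 𝕜 E]
  {C κ₁ κ₂ b₁ b₂ j : ℝ} {V W : BeamState E}

def form (κ₁ κ₂ b₁ b₂ j : ℝ) (V W : BeamState E) : 𝕜 :=
  (κ₁ : 𝕜) * ⟪V.φ' - V.ψ, W.φ' - W.ψ⟫_𝕜 + (κ₂ : 𝕜) * ⟪V.y' - V.z, W.y' - W.z⟫_𝕜
    + (b₁ : 𝕜) * ⟪V.ψ', W.ψ'⟫_𝕜 + (b₂ : 𝕜) * ⟪V.z', W.z'⟫_𝕜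
    + (j : 𝕜) * ⟪V.y - V.φ, W.y - W.φ⟫_𝕜

theorem norm_form_le (hC : 0 ≤ C) (hκ₁ : 0 ≤ κ₁) (hκ₂ : 0 ≤ κ₂) (hb₁ : 0 ≤ b₁) (hb₂ : 0 ≤ b₂)
    (hj : 0 ≤ j) (hV : V.Poincare C) (hW : W.Poincare C) :
    ‖(form κ₁ κ₂ b₁ b₂ j V W : 𝕜)‖ ≤
      (κ₁ * (1 + C) ^ 2 + κ₂ * (1 + C) ^ 2 + b₁ + b₂ + j * (2 * C) ^ 2)
        * √V.energy * √W.energy :=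
  calc ‖(form κ₁ κ₂ b₁ b₂ j V W : 𝕜)‖
      ≤ κ₁ * ((1 + C) * √V.energy * ((1 + C) * √W.energy))
        + κ₂ * ((1 + C) * √V.energy * ((1 + C) * √W.energy))
        + b₁ * (√V.energy * √W.energy) + b₂ * (√V.energy * √W.energy)
        + j * (2 * C * √V.energy * (2 * C * √W.energy)) := by
        unfold form
        grw [norm_add_le, norm_add_le, norm_add_le, norm_add_le]
        gcongr ?_ + ?_ + ?_ + ?_ + ?_
        · exact norm_ofReal_mul_inner_le hκ₁ (hV.norm_φ'_sub_ψ_le hC) (hW.norm_φ'_sub_ψ_le hC)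
        · exact norm_ofReal_mul_inner_le hκ₂ (hV.norm_y'_sub_z_le hC) (hW.norm_y'_sub_z_le hC)
        · exact norm_ofReal_mul_inner_le hb₁ V.norm_ψ'_le_sqrt_energy W.norm_ψ'_le_sqrt_energy
        · exact norm_ofReal_mul_inner_le hb₂ V.norm_z'_le_sqrt_energy W.norm_z'_le_sqrt_energy
        · exact norm_ofReal_mul_inner_le hj (hV.norm_y_sub_φ_le hC) (hW.norm_y_sub_φ_le hC)
    _ = _ := by ring

lemma re_form_self (κ₁ κ₂ b₁ b₂ j : ℝ) (V : BeamState E) :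
    RCLike.re (form κ₁ κ₂ b₁ b₂ j V V : 𝕜) =
      κ₁ * ‖V.φ' - V.ψ‖ ^ 2 + κ₂ * ‖V.y' - V.z‖ ^ 2 + b₁ * ‖V.ψ'‖ ^ 2 + b₂ * ‖V.z'‖ ^ 2
        + j * ‖V.y - V.φ‖ ^ 2 := by
  simp only [form, inner_self_eq_norm_sq_to_K]
  norm_cast

theorem energy_le_re_form (hκ₁ : 0 ≤ κ₁) (hκ₂ : 0 ≤ κ₂) (hb₁ : 0 ≤ b₁) (hb₂ : 0 ≤ b₂)
    (hj : 0 ≤ j) (hV : V.Poincare C) :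
    min (min κ₁ b₁) (min κ₂ b₂) / (2 * C ^ 2 + 2) * V.energy ≤
      RCLike.re (form κ₁ κ₂ b₁ b₂ j V V : 𝕜) := by
  set m := min (min κ₁ b₁) (min κ₂ b₂)
  have hm : 0 ≤ m := le_min (le_min hκ₁ hb₁) (le_min hκ₂ hb₂)
  have hφψ := sq_norm_add_sq_norm_le (v := V.φ') hV.2.1
  have hyz := sq_norm_add_sq_norm_le (v := V.y') hV.2.2.2
  calc m / (2 * C ^ 2 + 2) * V.energy
      ≤ m / (2 * C ^ 2 + 2) * ((2 * C ^ 2 + 2) *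
          (‖V.φ' - V.ψ‖ ^ 2 + ‖V.ψ'‖ ^ 2 + ‖V.y' - V.z‖ ^ 2 + ‖V.z'‖ ^ 2)) := by
        gcongr; unfold energy; linarith
    _ = m * ‖V.φ' - V.ψ‖ ^ 2 + m * ‖V.ψ'‖ ^ 2 + m * ‖V.y' - V.z‖ ^ 2 + m * ‖V.z'‖ ^ 2 := by
        field_simp
    _ ≤ κ₁ * ‖V.φ' - V.ψ‖ ^ 2 + b₁ * ‖V.ψ'‖ ^ 2 + κ₂ * ‖V.y' - V.z‖ ^ 2 + b₂ * ‖V.z'‖ ^ 2 := by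
        gcongr
        exacts [(min_le_left _ _).trans (min_le_left _ _),
          (min_le_left _ _).trans (min_le_right _ _),
          (min_le_right _ _).trans (min_le_left _ _),
          (min_le_right _ _).trans (min_le_right _ _)]
    _ ≤ RCLike.re (form κ₁ κ₂ b₁ b₂ j V V : 𝕜) := by
        rw [re_form_self]; nlinarith [mul_nonneg hj (sq_nonneg ‖V.y - V.φ‖)]

section OfContDiff

variable {φ ψ y z : ℝ → ℂ} (hφ : ContDiff ℝ 1 φ) (hψ : ContDiff ℝ 1 ψ) (hy : ContDiff ℝ 1 y)
  (hz : ContDiff ℝ 1 z)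

def ofContDiff (a b : ℝ) : BeamState (L2Ioc a b) where
  φ := toL2Ioc a b hφ.continuous
  ψ := toL2Ioc a b hψ.continuous
  y := toL2Ioc a b hy.continuous
  z := toL2Ioc a b hz.continuous
  φ' := toL2Ioc a b (hφ.continuous_deriv le_rfl)
  ψ' := toL2Ioc a b (hψ.continuous_deriv le_rfl)
  y' := toL2Ioc a b (hy.continuous_deriv le_rfl)
  z' := toL2Ioc a b (hz.continuous_deriv le_rfl)

lemma poincare_ofContDiff {a b : ℝ} (hab : a ≤ b) (hφa : φ a = 0) (hψa : ψ a = 0)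
    (hya : y a = 0) (hza : z a = 0) : (ofContDiff hφ hψ hy hz a b).Poincare (b - a) :=
  ⟨norm_toL2Ioc_le_mul_norm_deriv hab hφ hφa, norm_toL2Ioc_le_mul_norm_deriv hab hψ hψa,
    norm_toL2Ioc_le_mul_norm_deriv hab hy hya, norm_toL2Ioc_le_mul_norm_deriv hab hz hza⟩

lemma energy_ofContDiff {l : ℝ} (hl : 0 ≤ l) :
    (ofContDiff hφ hψ hy hz 0 l).energy = H01normSq l φ ψ y z := by
  simp only [H01normSq, energy, ofContDiff, norm_toL2Ioc_sq hl]

lemma form_ofContDiff {l : ℝ} (hl : 0 ≤ l) (κ₁ κ₂ b₁ b₂ j : ℝ) {φ₂ ψ₂ y₂ z₂ : ℝ → ℂ}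
    (hφ₂ : ContDiff ℝ 1 φ₂) (hψ₂ : ContDiff ℝ 1 ψ₂) (hy₂ : ContDiff ℝ 1 y₂)
    (hz₂ : ContDiff ℝ 1 z₂) :
    form κ₁ κ₂ b₁ b₂ j (ofContDiff hφ hψ hy hz 0 l) (ofContDiff hφ₂ hψ₂ hy₂ hz₂ 0 l) =
      Bform l κ₁ κ₂ b₁ b₂ j φ ψ y z φ₂ ψ₂ y₂ z₂ := by
  simp only [Bform, form, ofContDiff, ← toL2Ioc_sub, inner_toL2Ioc hl]
  rfl

end OfContDiff

end BeamState

open BeamState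

/-- For positive constants `κ₁, κ₂, b₁, b₂, ȷ`, the sesquilinear form `𝔅`
is bounded and strongly coercive on `[H₀¹(0,l)]⁴`: there are `Cb > 0` and `c > 0` with
`‖𝔅(V,W)‖ ≤ Cb ‖V‖_{[H₀¹]⁴} ‖W‖_{[H₀¹]⁴}` and
`Re 𝔅(V,V) ≥ c (‖φₓ‖² + ‖ψₓ‖² + ‖yₓ‖² + ‖zₓ‖²)` for all `V = (φ,ψ,y,z)`,
`W = (φ*,ψ*,y*,z*)` in `[H₀¹(0,l)]⁴`. -/
theorem statement11 (l κ₁ κ₂ b₁ b₂ j : ℝ) (hl : 0 < l)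
    (hκ₁ : 0 < κ₁) (hκ₂ : 0 < κ₂) (hb₁ : 0 < b₁) (hb₂ : 0 < b₂) (hj : 0 < j) :
    ∃ Cb > 0, ∃ c > 0,
      (∀ φ ψ y z φ₂ ψ₂ y₂ z₂ : ℝ → ℂ,
        InH01 l φ → InH01 l ψ → InH01 l y → InH01 l z →
        InH01 l φ₂ → InH01 l ψ₂ → InH01 l y₂ → InH01 l z₂ →
        ‖Bform l κ₁ κ₂ b₁ b₂ j φ ψ y z φ₂ ψ₂ y₂ z₂‖ ≤
          Cb * Real.sqrt (H01normSq l φ ψ y z) * Real.sqrt (H01normSq l φ₂ ψ₂ y₂ z₂)) ∧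
      (∀ φ ψ y z : ℝ → ℂ,
        InH01 l φ → InH01 l ψ → InH01 l y → InH01 l z →
        c * H01normSq l φ ψ y z ≤ (Bform l κ₁ κ₂ b₁ b₂ j φ ψ y z φ ψ y z).re) := by
  have hPoincare : ∀ {φ ψ y z : ℝ → ℂ} (hφ : InH01 l φ) (hψ : InH01 l ψ) (hy : InH01 l y)
      (hz : InH01 l z), (ofContDiff hφ.1 hψ.1 hy.1 hz.1 0 l).Poincare l := fun hφ hψ hy hz => by
    simpa only [sub_zero] using
      poincare_ofContDiff hφ.1 hψ.1 hy.1 hz.1 hl.le hφ.2.1 hψ.2.1 hy.2.1 hz.2.1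
  refine ⟨κ₁ * (1 + l) ^ 2 + κ₂ * (1 + l) ^ 2 + b₁ + b₂ + j * (2 * l) ^ 2, by positivity,
    min (min κ₁ b₁) (min κ₂ b₂) / (2 * l ^ 2 + 2), by positivity, ?_, ?_⟩
  · intro φ ψ y z φ₂ ψ₂ y₂ z₂ hφ hψ hy hz hφ₂ hψ₂ hy₂ hz₂
    rw [← form_ofContDiff hφ.1 hψ.1 hy.1 hz.1 hl.le _ _ _ _ _ hφ₂.1 hψ₂.1 hy₂.1 hz₂.1,
      ← energy_ofContDiff hφ.1 hψ.1 hy.1 hz.1 hl.le,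
      ← energy_ofContDiff hφ₂.1 hψ₂.1 hy₂.1 hz₂.1 hl.le]
    exact norm_form_le hl.le hκ₁.le hκ₂.le hb₁.le hb₂.le hj.le
      (hPoincare hφ hψ hy hz) (hPoincare hφ₂ hψ₂ hy₂ hz₂)
  · intro φ ψ y z hφ hψ hy hz
    rw [← form_ofContDiff hφ.1 hψ.1 hy.1 hz.1 hl.le _ _ _ _ _ hφ.1 hψ.1 hy.1 hz.1,
      ← energy_ofContDiff hφ.1 hψ.1 hy.1 hz.1 hl.le]
    simpa only [RCLike.re_to_complex] using
      energy_le_re_form (𝕜 := ℂ) hκ₁.le hκ₂.le hb₁.le hb₂.le hj.le (hPoincare hφ hψ hy hz)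
end
end
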